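/- arXiv:1601.03659 — 2 statements merged into one kernel-verified Lean document; each statement's English description precedes it below -/
import Mathlib

section
/- Let G be a D-regular graph on N vertices and let λ be the minimum eigenvalue of its adjacency matrix. Then for every subset S of vertices, the number of edges of G induced on S satisfies e(G[S]) ≥ (D/(2N))|S|² + (λ/(2N))|S|(N − |S|). -/
/-! The centred indicator `y = 1_S - (|S|/N) • 1` satisfies `λ ‖y‖² ≤ yᵀ A y`, because `λ` is the
least eigenvalue of the symmetric adjacency matrix `A`. Since `A 1 = D • 1`, centring lowers the
quadratic form `1_Sᵀ A 1_S = 2 e(G[S])` by exactly `D|S|²/N` and the norm `‖1_S‖² = |S|` by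
`|S|²/N`; rearranging gives the bound. -/

open Matrix Finset

namespace Matrix

variable {n : Type*} [Fintype n]

theorem IsHermitian.mul_dotProduct_self_le_of_forall_le_eigenvalue [DecidableEq n]
    {A : Matrix n n ℝ} (hA : A.IsHermitian) {lam : ℝ}
    (hlam : ∀ μ, Module.End.HasEigenvalue (toLin' A) μ → lam ≤ μ) (x : n → ℝ) :
    lam * (x ⬝ᵥ x) ≤ x ⬝ᵥ A *ᵥ x := by
  have hpsd : (A - algebraMap ℝ _ lam).PosSemidef := by
    refine posSemidef_iff_isHermitian_and_spectrum_nonneg.2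
      ⟨hA.sub (isHermitian_diagonal _), ?_⟩
    rw [← spectrum.sub_singleton_eq]
    rintro _ ⟨μ, hμ, _, rfl, rfl⟩
    rw [← AlgEquiv.spectrum_eq toLinAlgEquiv', ← Module.End.hasEigenvalue_iff_mem_spectrum] at hμ
    exact sub_nonneg.2 (hlam μ hμ)
  have := hpsd.dotProduct_mulVec_nonneg x
  rw [Algebra.algebraMap_eq_smul_one, sub_mulVec, smul_mulVec, one_mulVec, dotProduct_sub,
    dotProduct_smul, smul_eq_mul] at this
  simpa using this

theorem dotProduct_mulVec_sub_smul_one {A : Matrix n n ℝ} (hA : A.IsSymm) {d : ℝ}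
    (hd : A *ᵥ 1 = d • 1) (x : n → ℝ) (c : ℝ) :
    (x - c • 1) ⬝ᵥ A *ᵥ (x - c • 1) =
      x ⬝ᵥ A *ᵥ x - 2 * c * d * ∑ i, x i + c ^ 2 * d * Fintype.card n := by
  have h1 : 1 ⬝ᵥ A *ᵥ x = d * ∑ i, x i := by
    rw [dotProduct_mulVec, ← mulVec_transpose, hA.eq, hd, dotProduct_comm, dotProduct_smul,
      smul_eq_mul, dotProduct_one]
  simp only [mulVec_sub, mulVec_smul, hd, dotProduct_sub, sub_dotProduct, dotProduct_smul,
    smul_dotProduct, h1, smul_eq_mul]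
  simp only [dotProduct_one, Pi.one_apply, sum_const, card_univ, nsmul_eq_mul, mul_one]
  ring

end Matrix

namespace SimpleGraph
variable {V : Type*} [Fintype V] (G : SimpleGraph V) [DecidableRel G.Adj]

theorem two_mul_ncard_induced_edges_eq_dotProduct_indicator (S : Finset V) :
    2 * ({e ∈ G.edgeSet | ∀ v ∈ e, v ∈ (S : Set V)}.ncard : ℝ) =
      (S : Set V).indicator 1 ⬝ᵥ G.adjMatrix ℝ *ᵥ (S : Set V).indicator 1 := by
  classical
  set H := ((⊤ : G.Subgraph).induce S).spanningCoe
  have hE : {e ∈ G.edgeSet | ∀ v ∈ e, v ∈ (S : Set V)} = H.edgeSet := by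
    ext e
    induction e using Sym2.ind
    simp only [Set.mem_ofPred_eq, mem_edgeSet, Sym2.mem_iff, forall_eq_or_imp, forall_eq,
      SetLike.mem_coe, Subgraph.edgeSet_spanningCoe, Subgraph.mem_edgeSet, Subgraph.induce_adj,
      Subgraph.top_adj, H]
    tauto
  have hcount := H.two_mul_card_edgeFinset
  rw [card_filter, ← univ_product_univ, sum_product] at hcount
  rw [hE, ← coe_edgeFinset, Set.ncard_coe_finset, dotProduct_mulVec_adjMatrix]
  calc (2 * #H.edgeFinset : ℝ) = ∑ i, ∑ j, if H.Adj i j then 1 else 0 := by exact_mod_cast hcount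
    _ = _ := by
      refine sum_congr rfl fun i _ => sum_congr rfl fun j _ => ?_
      by_cases hi : i ∈ S <;> by_cases hj : j ∈ S <;> simp [H, hi, hj]

end SimpleGraph

theorem expander_mixing_lower_general (N D : ℕ) (G : SimpleGraph (Fin N))
    [DecidableRel G.Adj]
    (hreg : ∀ v, G.degree v = D) (lam : ℝ)
    (hmin : ∀ μ : ℝ, Module.End.HasEigenvalue (Matrix.toLin' (G.adjMatrix ℝ)) μ →
      lam ≤ μ)
    (S : Finset (Fin N)) :
    (({e ∈ G.edgeSet | ∀ v ∈ e, v ∈ (S : Set (Fin N))}.ncard : ℝ)) ≥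
      (D : ℝ) / (2 * N) * (S.card : ℝ) ^ 2 +
        lam / (2 * N) * (S.card : ℝ) * ((N : ℝ) - S.card) := by
  obtain rfl | hN := N.eq_zero_or_pos
  · simp [eq_empty_of_isEmpty S]
  classical
  set x := (S : Set (Fin N)).indicator (1 : Fin N → ℝ)
  set c := (#S : ℝ) / N
  have hsum : ∑ i, x i = #S := by simp [x, Set.indicator_apply]
  have hx : x ⬝ᵥ x = #S := by simp [x, dotProduct, Set.indicator_apply]
  have hA1 : G.adjMatrix ℝ *ᵥ 1 = (D : ℝ) • 1 := by
    ext v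
    simp [hreg v]
  have hyy : (x - c • 1) ⬝ᵥ (x - c • 1) = #S - 2 * c * #S + c ^ 2 * N := by
    simpa [hx, hsum] using dotProduct_mulVec_sub_smul_one isSymm_one (d := 1) (by simp) x c
  have hray := (G.isHermitian_adjMatrix ℝ).mul_dotProduct_self_le_of_forall_le_eigenvalue hmin
    (x - c • 1)
  rw [hyy, dotProduct_mulVec_sub_smul_one G.isSymm_adjMatrix hA1,
    ← G.two_mul_ncard_induced_edges_eq_dotProduct_indicator, hsum, Fintype.card_fin] at hray
  have hrearrange : (D : ℝ) / (2 * N) * #S ^ 2 + lam / (2 * N) * #S * (N - #S) =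
      ((2 * c * D * #S - c ^ 2 * D * N) + lam * (#S - 2 * c * #S + c ^ 2 * N)) / 2 := by
    simp only [c]
    field_simp
    ring
  rw [ge_iff_le, hrearrange]
  linarith

/-- Expander Mixing Lemma (lower bound form): if `G` is a `D`-regular graph on
`N` vertices and `lam` is the smallest eigenvalue of its adjacency matrix, then
for every vertex set `S`, the number of edges induced on `S` is at least
`(D/(2N))|S|² + (lam/(2N))|S|(N − |S|)`. -/
theorem expander_mixing_lower (N D : ℕ) (G : SimpleGraph (Fin N))
    [DecidableRel G.Adj]
    (hreg : ∀ v, G.degree v = D) (lam : ℝ)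
    (heig : Module.End.HasEigenvalue (Matrix.toLin' (G.adjMatrix ℝ)) lam)
    (hmin : ∀ μ : ℝ, Module.End.HasEigenvalue (Matrix.toLin' (G.adjMatrix ℝ)) μ →
      lam ≤ μ)
    (S : Finset (Fin N)) :
    (({e ∈ G.edgeSet | ∀ v ∈ e, v ∈ (S : Set (Fin N))}.ncard : ℝ)) ≥
      (D : ℝ) / (2 * N) * (S.card : ℝ) ^ 2 +
        lam / (2 * N) * (S.card : ℝ) * ((N : ℝ) - S.card) :=
  expander_mixing_lower_general N D G hreg lam hmin S
end

section
/- Let m be a positive integer and G a graph with at least m vertices. Let S be a set of m vertices of G of largest degree (i.e., every vertex outside S has degree at most the degree of every vertex in S). If the graph G − S (obtained by deleting S) has at least m² edges, then G contains a subgraph H with maximum degree Δ(H) ≤ m and at least m²/2 edges. -/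
/-!
If some vertex of `S` has degree less than `m`, then so does every vertex outside `S`, and
`G − S` itself is the required subgraph. Otherwise the `m` vertices `u₀, …, u_{m-1}` of `S` all
have degree at least `m`, and `uᵢ` can be joined to `m - i` of its neighbours other than
`u₀, …, u_{i-1}`. In this union of stars `uᵢ` has degree at most `(m - i) + i = m`, any other
vertex at most `m`, and there are `m + (m - 1) + ⋯ + 1 = m(m + 1)/2` edges.
-/

open Finset

theorem Finset.two_mul_sum_range_sub (m : ℕ) : 2 * ∑ i ∈ range m, (m - i) = m * (m + 1) := by
  induction m with
  | zero => rfl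
  | succ n ih =>
    rw [sum_range_succ', Nat.sub_zero]
    simp only [Nat.add_sub_add_right]
    grind

namespace SimpleGraph

variable {V : Type*} (G : SimpleGraph V)

theorem exists_le_edgeSet_eq_of_ncard_neighborSet_le [Finite V] {m : ℕ} (S : Set V)
    (hS : ∀ v ∉ S, (G.neighborSet v).ncard ≤ m) :
    ∃ H ≤ G, (∀ v, (H.neighborSet v).ncard ≤ m) ∧
      H.edgeSet = {e ∈ G.edgeSet | ∀ v ∈ e, v ∉ S} := by
  refine ⟨fromEdgeSet {e ∈ G.edgeSet | ∀ v ∈ e, v ∉ S}, ?_, fun v ↦ ?_, ?_⟩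
  · rw [fromEdgeSet_le]
    exact fun e he ↦ he.1.1
  · by_cases hv : v ∈ S
    · have : (fromEdgeSet {e ∈ G.edgeSet | ∀ v ∈ e, v ∉ S}).neighborSet v = ∅ :=
        Set.eq_empty_of_forall_notMem fun w hw ↦ hw.1.2 v (Sym2.mem_mk_left v w) hv
      rw [this, Set.ncard_empty]
      exact Nat.zero_le m
    · refine le_trans (Set.ncard_le_ncard fun w hw ↦ ?_) (hS v hv)
      exact (G.mem_edgeSet).1 hw.1.1
  · rw [edgeSet_fromEdgeSet]
    exact (Set.disjoint_left.2 fun e he ↦ G.not_isDiag_of_mem_edgeSet he.1).sdiff_eq_left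

section Stars

variable {m : ℕ} {u : Fin m → V} {T : Fin m → Finset V}

variable (u T) in
def starUnion : SimpleGraph V :=
  fromRel fun a b ↦ ∃ i, a = u i ∧ b ∈ T i

theorem starUnion_le (hadj : ∀ i, ∀ b ∈ T i, G.Adj (u i) b) : starUnion u T ≤ G := by
  rintro a b ⟨-, ⟨i, rfl, hb⟩ | ⟨i, rfl, ha⟩⟩
  exacts [hadj i b hb, (hadj i a ha).symm]

theorem neighborSet_starUnion_subset (hu : Function.Injective u)
    (hT : ∀ i j, u j ∈ T i → i < j) (i : Fin m) :
    (starUnion u T).neighborSet (u i) ⊆ ↑(T i) ∪ u '' Set.Iio i := by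
  rintro b ⟨-, ⟨j, hij, hb⟩ | ⟨j, rfl, hi⟩⟩
  · rw [hu hij]
    exact Or.inl hb
  · exact Or.inr ⟨j, hT j i hi, rfl⟩

theorem neighborSet_starUnion_subset_range {v : V} (hv : v ∉ Set.range u) :
    (starUnion u T).neighborSet v ⊆ Set.range u := by
  rintro b ⟨-, ⟨j, rfl, -⟩ | ⟨j, rfl, -⟩⟩
  exacts [absurd ⟨j, rfl⟩ hv, ⟨j, rfl⟩]

theorem ncard_neighborSet_starUnion_le [Finite V] (hu : Function.Injective u)
    (hT : ∀ i j, u j ∈ T i → i < j) (hcard : ∀ i, #(T i) = m - i) (v : V) :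
    ((starUnion u T).neighborSet v).ncard ≤ m := by
  by_cases hv : v ∈ Set.range u
  · obtain ⟨i, rfl⟩ := hv
    calc ((starUnion u T).neighborSet (u i)).ncard
        ≤ (↑(T i) ∪ u '' Set.Iio i).ncard :=
          Set.ncard_le_ncard (neighborSet_starUnion_subset hu hT i)
      _ ≤ (m - i) + i := by
          refine (Set.ncard_union_le _ _).trans (add_le_add ?_ ?_)
          · rw [Set.ncard_coe_finset, hcard]
          · refine (Set.ncard_image_le (Set.toFinite _)).trans_eq ?_
            rw [← Finset.coe_Iio, Set.ncard_coe_finset, Fin.card_Iio]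
      _ = m := Nat.sub_add_cancel i.is_le'
  · calc ((starUnion u T).neighborSet v).ncard ≤ (Set.range u).ncard :=
          Set.ncard_le_ncard (neighborSet_starUnion_subset_range hv)
      _ = m := by
          rw [Set.ncard_range_of_injective hu, Nat.card_eq_fintype_card, Fintype.card_fin]

theorem sum_card_le_ncard_edgeSet_starUnion [Finite V] (hu : Function.Injective u)
    (hT : ∀ i j, u j ∈ T i → i < j) :
    ∑ i, #(T i) ≤ (starUnion u T).edgeSet.ncard := by
  classical
  let edge : (Σ _ : Fin m, V) → Sym2 V := fun p ↦ s(u p.1, p.2)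
  have hinj : Set.InjOn edge ↑(univ.sigma T) := by
    rintro ⟨i, b⟩ hb ⟨j, c⟩ hc h
    simp only [coe_sigma, Set.mem_sigma_iff, coe_univ, Set.mem_univ, mem_coe, true_and] at hb hc
    rcases Sym2.eq_iff.1 h with ⟨hij, hbc⟩ | ⟨hic, hbj⟩
    · obtain rfl : i = j := hu hij
      obtain rfl : b = c := hbc
      rfl
    · exact absurd (hT i j (hbj ▸ hb)) (hT j i (hic ▸ hc)).asymm
  have hsub : edge '' ↑(univ.sigma T) ⊆ (starUnion u T).edgeSet := by
    rintro _ ⟨⟨i, b⟩, hb, rfl⟩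
    simp only [coe_sigma, Set.mem_sigma_iff, coe_univ, Set.mem_univ, mem_coe, true_and] at hb
    exact ⟨fun (h : u i = b) ↦ (hT i i (h ▸ hb)).false, Or.inl ⟨i, rfl, hb⟩⟩
  calc ∑ i, #(T i) = #(univ.sigma T) := (card_sigma _ _).symm
    _ = (edge '' ↑(univ.sigma T)).ncard := by rw [hinj.ncard_image, Set.ncard_coe_finset]
    _ ≤ (starUnion u T).edgeSet.ncard := Set.ncard_le_ncard hsub

theorem exists_leaves_of_le_ncard_neighborSet [Finite V]
    (hdeg : ∀ i, m ≤ (G.neighborSet (u i)).ncard) :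
    ∃ T : Fin m → Finset V, (∀ i, ∀ b ∈ T i, G.Adj (u i) b) ∧
      (∀ i j, u j ∈ T i → i < j) ∧ ∀ i, #(T i) = m - i := by
  have hfree (i : Fin m) : m - i ≤ (G.neighborSet (u i) \ u '' Set.Iio i).ncard := by
    have hprev : (u '' Set.Iio i).ncard ≤ i :=
      (Set.ncard_image_le (Set.toFinite _)).trans_eq
        (by rw [← Finset.coe_Iio, Set.ncard_coe_finset, Fin.card_Iio])
    have hsplit := (Set.ncard_le_ncard (Set.subset_sdiff_union (G.neighborSet (u i))
      (u '' Set.Iio i))).trans (Set.ncard_union_le _ _)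
    have := hdeg i
    omega
  choose t htsub htcard using fun i ↦ Set.exists_subset_card_eq (hfree i)
  refine ⟨fun i ↦ (t i).toFinite.toFinset, fun i b hb ↦ ?_, fun i j hj ↦ ?_, fun i ↦ ?_⟩
  · exact (htsub i ((t i).toFinite.mem_toFinset.1 hb)).1
  · obtain ⟨hadj, hnotprev⟩ := htsub i ((t i).toFinite.mem_toFinset.1 hj)
    refine lt_of_le_of_ne (not_lt.1 fun hji ↦ hnotprev ⟨j, hji, rfl⟩) ?_
    rintro rfl
    exact G.loopless.irrefl _ hadj
  · rw [← Set.ncard_eq_toFinset_card, htcard]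

theorem exists_le_ncard_neighborSet_le_of_injective [Finite V] (hu : Function.Injective u)
    (hdeg : ∀ i, m ≤ (G.neighborSet (u i)).ncard) :
    ∃ H ≤ G, (∀ v, (H.neighborSet v).ncard ≤ m) ∧ m * (m + 1) ≤ 2 * H.edgeSet.ncard := by
  obtain ⟨T, hadj, hT, hcard⟩ := G.exists_leaves_of_le_ncard_neighborSet hdeg
  refine ⟨starUnion u T, G.starUnion_le hadj, ncard_neighborSet_starUnion_le hu hT hcard, ?_⟩
  calc m * (m + 1) = 2 * ∑ i ∈ range m, (m - i) := (two_mul_sum_range_sub m).symm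
    _ = 2 * ∑ i, #(T i) := by simp only [hcard, Fin.sum_univ_eq_sum_range (m - ·)]
    _ ≤ 2 * (starUnion u T).edgeSet.ncard :=
      Nat.mul_le_mul_left 2 (sum_card_le_ncard_edgeSet_starUnion hu hT)

end Stars

theorem exists_le_ncard_neighborSet_le_of_card_eq [Finite V] {m : ℕ} (S : Finset V)
    (hS : #S = m) (hdeg : ∀ v ∈ S, m ≤ (G.neighborSet v).ncard) :
    ∃ H ≤ G, (∀ v, (H.neighborSet v).ncard ≤ m) ∧ m * (m + 1) ≤ 2 * H.edgeSet.ncard :=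
  G.exists_le_ncard_neighborSet_le_of_injective
    (Subtype.val_injective.comp (S.equivFinOfCardEq hS).symm.injective)
    fun i ↦ hdeg _ ((S.equivFinOfCardEq hS).symm i).2

end SimpleGraph

theorem exists_bounded_degree_subgraph_general {V : Type*} [Fintype V]
    (G : SimpleGraph V) (m : ℕ)
    (S : Finset V) (hScard : S.card = m)
    (hSdeg : ∀ v ∉ S, ∀ u ∈ S, (G.neighborSet v).ncard ≤ (G.neighborSet u).ncard)
    (hedges : m ^ 2 ≤ {e ∈ G.edgeSet | ∀ v ∈ e, v ∉ (S : Set V)}.ncard) :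
    ∃ H : SimpleGraph V, H ≤ G ∧ (∀ v, (H.neighborSet v).ncard ≤ m) ∧
      (H.edgeSet.ncard : ℝ) ≥ (m : ℝ) ^ 2 / 2 := by
  suffices ∃ H ≤ G, (∀ v, (H.neighborSet v).ncard ≤ m) ∧ m ^ 2 ≤ 2 * H.edgeSet.ncard by
    obtain ⟨H, hHG, hHdeg, hHedges⟩ := this
    refine ⟨H, hHG, hHdeg, ?_⟩
    rw [ge_iff_le, div_le_iff₀ two_pos]
    exact_mod_cast (by omega : m ^ 2 ≤ H.edgeSet.ncard * 2)
  by_cases hhigh : ∀ u ∈ S, m ≤ (G.neighborSet u).ncard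
  · obtain ⟨H, hHG, hHdeg, hHedges⟩ := G.exists_le_ncard_neighborSet_le_of_card_eq S hScard hhigh
    exact ⟨H, hHG, hHdeg, le_trans (by nlinarith) hHedges⟩
  · push Not at hhigh
    obtain ⟨u, huS, hu⟩ := hhigh
    obtain ⟨H, hHG, hHdeg, hHedges⟩ := G.exists_le_edgeSet_eq_of_ncard_neighborSet_le (S : Set V)
      fun v hv ↦ (hSdeg v hv u huS).trans hu.le
    exact ⟨H, hHG, hHdeg, by rw [hHedges]; omega⟩

/-- Let `G` be a graph, `S` a set of `m` vertices of largest degree, and suppose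
`G − S` has at least `m²` edges. Then `G` has a subgraph `H` with maximum
degree at most `m` and at least `m²/2` edges. -/
theorem exists_bounded_degree_subgraph {V : Type*} [Fintype V]
    (G : SimpleGraph V) (m : ℕ) (hm : 0 < m)
    (S : Finset V) (hScard : S.card = m)
    (hSdeg : ∀ v ∉ S, ∀ u ∈ S, (G.neighborSet v).ncard ≤ (G.neighborSet u).ncard)
    (hedges : m ^ 2 ≤ {e ∈ G.edgeSet | ∀ v ∈ e, v ∉ (S : Set V)}.ncard) :
    ∃ H : SimpleGraph V, H ≤ G ∧ (∀ v, (H.neighborSet v).ncard ≤ m) ∧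
      (H.edgeSet.ncard : ℝ) ≥ (m : ℝ) ^ 2 / 2 :=
  exists_bounded_degree_subgraph_general G m S hScard hSdeg hedges
end
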